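/- The Henderson block matrix K is invertible, and its inverse is the (p+r)×(p+r) block matrix with blocks (K⁻¹)₁₁ = (XᵀV⁻¹X)⁻¹, (K⁻¹)₁₂ = −(XᵀV⁻¹X)⁻¹XᵀV⁻¹ZG, (K⁻¹)₂₁ = −GZᵀV⁻¹X(XᵀV⁻¹X)⁻¹, and (K⁻¹)₂₂ = (ZᵀR⁻¹Z + G⁻¹)⁻¹ + GZᵀV⁻¹X(XᵀV⁻¹X)⁻¹XᵀV⁻¹ZG; i.e., the product of K with this block matrix (in either order) is the identity matrix. -/

import Mathlib

/-!
The lower-right block `D = ZᵀR⁻¹Z + G⁻¹` of `K` is invertible, so `K⁻¹` is given by the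
block-inverse formula in terms of `D⁻¹` and the Schur complement `XᵀR⁻¹X - XᵀR⁻¹Z D⁻¹ ZᵀR⁻¹X`.
By the Woodbury identity `V⁻¹ = R⁻¹ - R⁻¹Z D⁻¹ ZᵀR⁻¹` this Schur complement is `XᵀV⁻¹X`, and the
push-through identities `R⁻¹Z D⁻¹ = V⁻¹ZG`, `D⁻¹ZᵀR⁻¹ = GZᵀV⁻¹` turn the remaining blocks into
the stated ones. Positive definiteness of `R`, `G` and `V`, with `X` of full column rank, gives
the invertibility of `D` and `XᵀV⁻¹X`.
-/

open Matrix

namespace Matrix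

theorem mulVec_injective_of_rank_eq_card {m n K : Type*} [Fintype n] [Field K] {A : Matrix m n K}
    (hA : A.rank = Fintype.card n) : Function.Injective A.mulVec :=
  mulVec_injective_iff.mpr <| linearIndependent_iff_card_eq_finrank_span.mpr <|
    hA.symm.trans A.rank_eq_finrank_span_cols

variable {l m n : Type*} [Fintype l] [Fintype m] [Fintype n] [DecidableEq l] [DecidableEq m]
  [DecidableEq n] {α : Type*} [CommRing α]

theorem fromBlocks_mul_fromBlocks_schur₂₂_eq_one (A : Matrix m m α) (B : Matrix m n α)
    (C : Matrix n m α) (D : Matrix n n α) (hD : IsUnit D) (hS : IsUnit (A - B * D⁻¹ * C)) :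
    fromBlocks A B C D *
      fromBlocks ((A - B * D⁻¹ * C)⁻¹) (-((A - B * D⁻¹ * C)⁻¹ * (B * D⁻¹)))
        (-(D⁻¹ * C * (A - B * D⁻¹ * C)⁻¹))
        (D⁻¹ + D⁻¹ * C * (A - B * D⁻¹ * C)⁻¹ * (B * D⁻¹)) = 1 := by
  let := hD.invertible
  simp only [← invOf_eq_nonsing_inv D] at hS ⊢
  let := hS.invertible
  let := fromBlocks₂₂Invertible A B C D
  rw [← invOf_eq_nonsing_inv, ← Matrix.mul_assoc, ← Matrix.mul_assoc, ← invOf_fromBlocks₂₂_eq,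
    mul_invOf_self]

section PushThrough

variable (A : Matrix n n α) (U : Matrix n m α) (C : Matrix m m α) (V : Matrix m n α)

theorem add_mul_mul_inv_mul_mul_eq (hA : IsUnit A) (hC : IsUnit C)
    (hAC : IsUnit (C⁻¹ + V * A⁻¹ * U)) :
    (A + U * C * V)⁻¹ * U * C = A⁻¹ * U * (C⁻¹ + V * A⁻¹ * U)⁻¹ := by
  have hinner : C - (C⁻¹ + V * A⁻¹ * U)⁻¹ * (V * A⁻¹ * U) * C = (C⁻¹ + V * A⁻¹ * U)⁻¹ :=
    calc C - (C⁻¹ + V * A⁻¹ * U)⁻¹ * (V * A⁻¹ * U) * C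
        = C - (C⁻¹ + V * A⁻¹ * U)⁻¹ * (C⁻¹ + V * A⁻¹ * U - C⁻¹) * C := by
          rw [add_sub_cancel_left]
      _ = (C⁻¹ + V * A⁻¹ * U)⁻¹ := by
          rw [Matrix.mul_sub, Matrix.sub_mul, nonsing_inv_mul _ ((isUnit_iff_isUnit_det _).mp hAC),
            Matrix.one_mul, Matrix.mul_assoc, nonsing_inv_mul _ ((isUnit_iff_isUnit_det _).mp hC),
            Matrix.mul_one, sub_sub_cancel]
  calc (A + U * C * V)⁻¹ * U * C
      = A⁻¹ * U * (C - (C⁻¹ + V * A⁻¹ * U)⁻¹ * (V * A⁻¹ * U) * C) := by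
        rw [add_mul_mul_inv_eq_sub _ _ _ _ hA hC hAC]
        simp only [Matrix.sub_mul, Matrix.mul_sub, Matrix.mul_assoc]
    _ = A⁻¹ * U * (C⁻¹ + V * A⁻¹ * U)⁻¹ := by rw [hinner]

theorem mul_mul_add_mul_mul_inv_eq (hA : IsUnit A) (hC : IsUnit C)
    (hAC : IsUnit (C⁻¹ + V * A⁻¹ * U)) :
    C * V * (A + U * C * V)⁻¹ = (C⁻¹ + V * A⁻¹ * U)⁻¹ * V * A⁻¹ := by
  have hinner : C - C * (V * A⁻¹ * U) * (C⁻¹ + V * A⁻¹ * U)⁻¹ = (C⁻¹ + V * A⁻¹ * U)⁻¹ :=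
    calc C - C * (V * A⁻¹ * U) * (C⁻¹ + V * A⁻¹ * U)⁻¹
        = C - C * (C⁻¹ + V * A⁻¹ * U - C⁻¹) * (C⁻¹ + V * A⁻¹ * U)⁻¹ := by
          rw [add_sub_cancel_left]
      _ = (C⁻¹ + V * A⁻¹ * U)⁻¹ := by
          rw [Matrix.mul_sub, Matrix.sub_mul, Matrix.mul_assoc,
            mul_nonsing_inv _ ((isUnit_iff_isUnit_det _).mp hAC), Matrix.mul_one,
            mul_nonsing_inv _ ((isUnit_iff_isUnit_det _).mp hC), Matrix.one_mul, sub_sub_cancel]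
  calc C * V * (A + U * C * V)⁻¹
      = (C - C * (V * A⁻¹ * U) * (C⁻¹ + V * A⁻¹ * U)⁻¹) * V * A⁻¹ := by
        rw [add_mul_mul_inv_eq_sub _ _ _ _ hA hC hAC]
        simp only [Matrix.sub_mul, Matrix.mul_sub, Matrix.mul_assoc]
    _ = (C⁻¹ + V * A⁻¹ * U)⁻¹ * V * A⁻¹ := by rw [hinner]

end PushThrough

theorem henderson_fromBlocks_mul_eq_one (X : Matrix l m α) (Z : Matrix l n α)
    (R : Matrix l l α) (G : Matrix n n α) (V : Matrix l l α) (hV : V = R + Z * G * Zᵀ)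
    (hR : IsUnit R) (hG : IsUnit G) (hD : IsUnit (Zᵀ * R⁻¹ * Z + G⁻¹))
    (hA : IsUnit (Xᵀ * V⁻¹ * X)) :
    fromBlocks (Xᵀ * R⁻¹ * X) (Xᵀ * R⁻¹ * Z) (Zᵀ * R⁻¹ * X) (Zᵀ * R⁻¹ * Z + G⁻¹) *
      fromBlocks ((Xᵀ * V⁻¹ * X)⁻¹) (-((Xᵀ * V⁻¹ * X)⁻¹ * Xᵀ * V⁻¹ * Z * G))
        (-(G * Zᵀ * V⁻¹ * X * (Xᵀ * V⁻¹ * X)⁻¹))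
        ((Zᵀ * R⁻¹ * Z + G⁻¹)⁻¹ + G * Zᵀ * V⁻¹ * X * (Xᵀ * V⁻¹ * X)⁻¹ * Xᵀ * V⁻¹ * Z * G) = 1 := by
  have hD' : IsUnit (G⁻¹ + Zᵀ * R⁻¹ * Z) := add_comm (Zᵀ * R⁻¹ * Z) G⁻¹ ▸ hD
  have hschur : Xᵀ * R⁻¹ * X - Xᵀ * R⁻¹ * Z * (Zᵀ * R⁻¹ * Z + G⁻¹)⁻¹ * (Zᵀ * R⁻¹ * X) =
      Xᵀ * V⁻¹ * X := by
    rw [hV, add_mul_mul_inv_eq_sub _ _ _ _ hR hG hD', add_comm G⁻¹]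
    simp only [Matrix.mul_sub, Matrix.sub_mul, Matrix.mul_assoc]
  have hright : Xᵀ * R⁻¹ * Z * (Zᵀ * R⁻¹ * Z + G⁻¹)⁻¹ = Xᵀ * V⁻¹ * Z * G := by
    have h := add_mul_mul_inv_mul_mul_eq R Z G Zᵀ hR hG hD'
    rw [← hV, add_comm G⁻¹] at h
    simp only [Matrix.mul_assoc] at h ⊢
    rw [h]
  have hleft : (Zᵀ * R⁻¹ * Z + G⁻¹)⁻¹ * (Zᵀ * R⁻¹ * X) = G * Zᵀ * V⁻¹ * X := by
    have h := mul_mul_add_mul_mul_inv_eq R Z G Zᵀ hR hG hD'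
    rw [← hV, add_comm G⁻¹] at h
    rw [h]
    simp only [Matrix.mul_assoc]
  have h := fromBlocks_mul_fromBlocks_schur₂₂_eq_one _ _ _ _ hD (hschur ▸ hA)
  rw [hschur, hright, hleft] at h
  simpa only [Matrix.mul_assoc] using h

end Matrix

theorem stmt6_general {m p r : ℕ}
    (X : Matrix (Fin m) (Fin p) ℝ) (Z : Matrix (Fin m) (Fin r) ℝ)
    (R : Matrix (Fin m) (Fin m) ℝ) (G : Matrix (Fin r) (Fin r) ℝ)
    (hR : R.PosDef) (hG : G.PosDef)
    (hX : X.rank = p)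
    (V : Matrix (Fin m) (Fin m) ℝ) (hV : V = R + Z * G * Zᵀ)
    (K : Matrix (Fin p ⊕ Fin r) (Fin p ⊕ Fin r) ℝ)
    (hK : K = fromBlocks (Xᵀ * R⁻¹ * X) (Xᵀ * R⁻¹ * Z)
        (Zᵀ * R⁻¹ * X) (Zᵀ * R⁻¹ * Z + G⁻¹))
    (Kinv : Matrix (Fin p ⊕ Fin r) (Fin p ⊕ Fin r) ℝ)
    (hKinv : Kinv = fromBlocks
        ((Xᵀ * V⁻¹ * X)⁻¹)
        (-((Xᵀ * V⁻¹ * X)⁻¹ * Xᵀ * V⁻¹ * Z * G))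
        (-(G * Zᵀ * V⁻¹ * X * (Xᵀ * V⁻¹ * X)⁻¹))
        ((Zᵀ * R⁻¹ * Z + G⁻¹)⁻¹ + G * Zᵀ * V⁻¹ * X * (Xᵀ * V⁻¹ * X)⁻¹ * Xᵀ * V⁻¹ * Z * G)) :
    IsUnit K ∧ K * Kinv = 1 ∧ Kinv * K = 1 := by
  have hVpd : V.PosDef := by
    simpa [hV] using hR.add_posSemidef (hG.posSemidef.mul_mul_conjTranspose_same Z)
  have hD : IsUnit (Zᵀ * R⁻¹ * Z + G⁻¹) := by
    simpa using (PosDef.posSemidef_add (hR.inv.posSemidef.conjTranspose_mul_mul_same Z)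
      hG.inv).isUnit
  have hA : IsUnit (Xᵀ * V⁻¹ * X) := by
    simpa using (hVpd.inv.conjTranspose_mul_mul_same
      (mulVec_injective_of_rank_eq_card (by simpa using hX))).isUnit
  have hKK : K * Kinv = 1 := by
    rw [hK, hKinv]
    exact henderson_fromBlocks_mul_eq_one X Z R G V hV hR.isUnit hG.isUnit hD hA
  have hKK' : Kinv * K = 1 := mul_eq_one_comm.mp hKK
  exact ⟨⟨⟨K, Kinv, hKK, hKK'⟩, rfl⟩, hKK, hKK'⟩

/-- The Henderson block matrix `K` is invertible, with inverse the block matrix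
with blocks `(K⁻¹)₁₁ = (XᵀV⁻¹X)⁻¹`, `(K⁻¹)₁₂ = −(XᵀV⁻¹X)⁻¹XᵀV⁻¹ZG`,
`(K⁻¹)₂₁ = −GZᵀV⁻¹X(XᵀV⁻¹X)⁻¹` and
`(K⁻¹)₂₂ = (ZᵀR⁻¹Z + G⁻¹)⁻¹ + GZᵀV⁻¹X(XᵀV⁻¹X)⁻¹XᵀV⁻¹ZG`:
the product of `K` with this block matrix in either order is the identity. -/
theorem stmt6 {m p r : ℕ} (hm : 0 < m) (hp : 0 < p) (hr : 0 < r)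
    (X : Matrix (Fin m) (Fin p) ℝ) (Z : Matrix (Fin m) (Fin r) ℝ)
    (R : Matrix (Fin m) (Fin m) ℝ) (G : Matrix (Fin r) (Fin r) ℝ)
    (hR : R.PosDef) (hG : G.PosDef)
    (hX : X.rank = p)
    (V : Matrix (Fin m) (Fin m) ℝ) (hV : V = R + Z * G * Zᵀ)
    (K : Matrix (Fin p ⊕ Fin r) (Fin p ⊕ Fin r) ℝ)
    (hK : K = fromBlocks (Xᵀ * R⁻¹ * X) (Xᵀ * R⁻¹ * Z)
        (Zᵀ * R⁻¹ * X) (Zᵀ * R⁻¹ * Z + G⁻¹))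
    (Kinv : Matrix (Fin p ⊕ Fin r) (Fin p ⊕ Fin r) ℝ)
    (hKinv : Kinv = fromBlocks
        ((Xᵀ * V⁻¹ * X)⁻¹)
        (-((Xᵀ * V⁻¹ * X)⁻¹ * Xᵀ * V⁻¹ * Z * G))
        (-(G * Zᵀ * V⁻¹ * X * (Xᵀ * V⁻¹ * X)⁻¹))
        ((Zᵀ * R⁻¹ * Z + G⁻¹)⁻¹ + G * Zᵀ * V⁻¹ * X * (Xᵀ * V⁻¹ * X)⁻¹ * Xᵀ * V⁻¹ * Z * G)) :
    IsUnit K ∧ K * Kinv = 1 ∧ Kinv * K = 1 :=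
  stmt6_general X Z R G hR hG hX V hV K hK Kinv hKinv
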